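/- Let M = [a,b) and N = [c,d) be interval modules (0 ≤ a < b, 0 ≤ c < d). Define σ = min S_{M,N} if S_{M,N} ≠ ∅ and σ = 0 otherwise, and τ = min S_{N,M} if S_{N,M} ≠ ∅ and τ = 0 otherwise. Then max{|a−c|, |b−d|} = max{σ, τ}; that is, max{|a−c|,|b−d|} is the parameter value at which the last homomorphism between M and N is born. -/

import Mathlib

open scoped NNReal

/-- A persistence module: a functor from `[0,∞)` to real vector spaces. -/
structure PM where
  V : ℝ≥0 → Type
  [grp : ∀ x, AddCommGroup (V x)]
  [mod : ∀ x, Module ℝ (V x)]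
  map : ∀ {x y : ℝ≥0}, x ≤ y → (V x →ₗ[ℝ] V y)
  map_id : ∀ x : ℝ≥0, map (le_refl x) = LinearMap.id
  map_comp : ∀ {x y z : ℝ≥0} (h1 : x ≤ y) (h2 : y ≤ z),
    (map h2).comp (map h1) = map (h1.trans h2)

attribute [instance] PM.grp PM.mod

/-- A morphism of persistence modules. -/
structure PM.Hom (M N : PM) where
  app : ∀ x : ℝ≥0, M.V x →ₗ[ℝ] N.V x
  comm : ∀ {x y : ℝ≥0} (h : x ≤ y), (app y).comp (M.map h) = (N.map h).comp (app x)

/-- The shifted module `M·ε`. -/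
def PM.shift (M : PM) (ε : ℝ≥0) : PM where
  V x := M.V (x + ε)
  grp x := inferInstance
  mod x := inferInstance
  map h := M.map (add_le_add h le_rfl)
  map_id x := M.map_id (x + ε)
  map_comp h1 h2 := M.map_comp _ _

noncomputable def intervalSub (α β : ℝ) (x : ℝ≥0) : Submodule ℝ ℝ :=
  if α ≤ (x : ℝ) ∧ (x : ℝ) < β then ⊤ else ⊥

/-- The interval module `[α,β)`. -/
noncomputable def intervalModule (α β : ℝ) : PM where
  V x := ↥(intervalSub α β x)
  grp x := inferInstance
  mod x := inferInstance
  map {x y} h := LinearMap.codRestrict _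
      ((if α ≤ (x : ℝ) ∧ (y : ℝ) < β then (1 : ℝ) else 0) • (intervalSub α β x).subtype)
      (by
        intro v
        by_cases hy : α ≤ (y : ℝ) ∧ (y : ℝ) < β
        · simp [intervalSub, hy]
        · have hc : ¬(α ≤ (x : ℝ) ∧ (y : ℝ) < β) := by
            intro hc
            exact hy ⟨le_trans hc.1 (by exact_mod_cast h), hc.2⟩
          rw [if_neg hc, zero_smul, LinearMap.zero_apply]
          exact Submodule.zero_mem _)
  map_id x := by
    ext v
    by_cases hx : α ≤ (x : ℝ) ∧ (x : ℝ) < β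
    · simp [hx]
    · have hv : (v : ℝ) = 0 := by
        have h2 := v.2
        simp only [intervalSub, if_neg hx, Submodule.mem_bot] at h2
        exact h2
      simp [hx, hv]
  map_comp {x y z} h1 h2 := by
    ext v
    by_cases hC : α ≤ (x : ℝ) ∧ (z : ℝ) < β
    · have hA : α ≤ (x : ℝ) ∧ (y : ℝ) < β :=
        ⟨hC.1, lt_of_le_of_lt (by exact_mod_cast h2) hC.2⟩
      have hB : α ≤ (y : ℝ) ∧ (z : ℝ) < β :=
        ⟨le_trans hC.1 (by exact_mod_cast h1), hC.2⟩
      simp [hA, hB, hC]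
    · rcases not_and_or.mp hC with hx | hz
      · have hA : ¬(α ≤ (x : ℝ) ∧ (y : ℝ) < β) := fun h => hx h.1
        simp [hA, hC]
        split_ifs <;> simp
      · have hB : ¬(α ≤ (y : ℝ) ∧ (z : ℝ) < β) := fun h => hz h.2
        simp [hB, hC]

/-- `Hom(M,N) ≠ {0}`: there is a nonzero morphism from `M` to `N`. -/
def HomNeZero (M N : PM) : Prop := ∃ F : PM.Hom M N, ∃ x, F.app x ≠ 0

/-- `S_{M,N} = {x ≥ 0 : Hom(M, N·x) ≠ {0}}`. -/
noncomputable def Sset (M N : PM) : Set ℝ :=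
  {x : ℝ | 0 ≤ x ∧ HomNeZero M (N.shift x.toNNReal)}

/-- The canonical morphism `Π_M^{M·τ} : M → M·τ`. -/
def PM.pi (M : PM) (τ : ℝ≥0) : M.Hom (M.shift τ) where
  app x := M.map le_self_add
  comm {x y} h := by
    show (M.map le_self_add).comp (M.map h) =
      (M.map (add_le_add h le_rfl)).comp (M.map le_self_add)
    rw [M.map_comp, M.map_comp]

/-- The pair `(Φ, Ψ)` is an `ε`-interleaving between `M` and `N`:
`(Ψ·ε) ∘ Φ = Π_M^{M·2ε}` and `(Φ·ε) ∘ Ψ = Π_N^{N·2ε}` (expressed pointwise). -/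
def IsInterleaving (M N : PM) (ε : ℝ≥0)
    (Φ : M.Hom (N.shift ε)) (Ψ : N.Hom (M.shift ε)) : Prop :=
  (∀ x : ℝ≥0, (Ψ.app (x + ε)).comp (Φ.app x) =
      M.map (le_self_add.trans le_self_add : x ≤ x + ε + ε)) ∧
  (∀ x : ℝ≥0, (Φ.app (x + ε)).comp (Ψ.app x) =
      N.map (le_self_add.trans le_self_add : x ≤ x + ε + ε))

/-!
A nonzero morphism `[a,b) → [c,d)·t` exists iff `c ≤ a + t < d ≤ b + t`. By naturality, a nonzero
component at some `x` propagates back to the birth time `a`, since the structure maps of `[a,b)`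
out of `a` are onto; and it cannot survive the death time `b` of the source unless the target dies
by then too, since the structure maps of `[c,d)·t` below its death time are injective. Conversely,
the identity on the overlap `[a, d - t)` is a morphism. Hence `S_{[a,b),[c,d)}` is the interval
`[max (0, c - a, d - b), d - a)`, and the claim compares the least elements of the two sets.
-/

namespace PM.Hom

variable {M N : PM} (F : M.Hom N) {x y : ℝ≥0} (h : x ≤ y)

lemma app_ne_zero_of_surjective (hM : Function.Surjective (M.map h)) (hy : F.app y ≠ 0) :
    F.app x ≠ 0 := by
  intro hx
  refine hy (LinearMap.ext fun w => ?_)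
  obtain ⟨v, rfl⟩ := hM w
  simpa [hx] using LinearMap.congr_fun (F.comm h) v

lemma app_eq_zero_of_injective (hM : M.map h = 0) (hN : Function.Injective (N.map h)) :
    F.app x = 0 :=
  LinearMap.ext fun v => hN <| by simpa [hM] using (LinearMap.congr_fun (F.comm h) v).symm

end PM.Hom

namespace intervalModule

variable {α β : ℝ} {x y : ℝ≥0}

lemma subsingleton_V (hx : (x : ℝ) ∉ Set.Ico α β) :
    Subsingleton ((intervalModule α β).V x) := by
  rw [Set.mem_Ico] at hx
  change Subsingleton (intervalSub α β x)
  rw [intervalSub, if_neg hx]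
  infer_instance

lemma mem_of_ne_zero_of_domain {W : Type} [AddCommGroup W] [Module ℝ W]
    {f : (intervalModule α β).V x →ₗ[ℝ] W} (hf : f ≠ 0) : (x : ℝ) ∈ Set.Ico α β := by
  by_contra hx
  have := subsingleton_V hx
  exact hf (Subsingleton.elim _ _)

lemma mem_of_ne_zero_of_codomain {W : Type} [AddCommGroup W] [Module ℝ W]
    {f : W →ₗ[ℝ] (intervalModule α β).V x} (hf : f ≠ 0) : (x : ℝ) ∈ Set.Ico α β := by
  by_contra hx
  have := subsingleton_V hx
  exact hf (Subsingleton.elim _ _)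

lemma val_map (h : x ≤ y) (v : (intervalModule α β).V x) :
    Subtype.val ((intervalModule α β).map h v) =
      if α ≤ x ∧ (y : ℝ) < β then Subtype.val v else 0 := by
  change (((if α ≤ (x : ℝ) ∧ (y : ℝ) < β then (1 : ℝ) else 0) •
    (intervalSub α β x).subtype) v : ℝ) = _
  split_ifs
  · simp
  · rw [zero_smul]; rfl

lemma map_injective (h : x ≤ y) (hy : (y : ℝ) < β) :
    Function.Injective ((intervalModule α β).map h) := by
  by_cases hx : α ≤ x
  · intro v w hvw
    have := congrArg Subtype.val hvw
    simp only [val_map, if_pos (And.intro hx hy)] at this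
    exact Subtype.ext this
  · have := subsingleton_V (β := β) (fun h => hx h.1)
    exact Function.injective_of_subsingleton _

lemma map_surjective (h : x ≤ y) (hx : α ≤ x) :
    Function.Surjective ((intervalModule α β).map h) := by
  by_cases hy : (y : ℝ) < β
  · intro w
    have hmem : intervalSub α β x = ⊤ := if_pos ⟨hx, lt_of_le_of_lt h hy⟩
    refine ⟨⟨w.val, hmem ▸ Submodule.mem_top⟩, Subtype.ext ?_⟩
    exact (val_map h _).trans (if_pos ⟨hx, hy⟩)
  · have := subsingleton_V (α := α) (fun h => hy h.2)
    exact fun w => ⟨0, Subsingleton.elim _ _⟩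

lemma map_eq_zero (h : x ≤ y) (hy : β ≤ y) : (intervalModule α β).map h = 0 := by
  have := subsingleton_V (α := α) (x := y) (fun h => (lt_of_le_of_lt hy h.2).false)
  exact Subsingleton.elim _ _

lemma mem_of_val_ne_zero {v : (intervalModule α β).V x} (hv : Subtype.val v ≠ 0) :
    (x : ℝ) ∈ Set.Ico α β := by
  by_contra hx
  have := subsingleton_V hx
  exact hv (congrArg Subtype.val (Subsingleton.elim v 0))

variable {a b c d : ℝ} {t : ℝ≥0}

noncomputable def homShiftApp (hca : c ≤ a + t) (x : ℝ≥0) :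
    (intervalModule a b).V x →ₗ[ℝ] (intervalModule c d).V (x + t) :=
  LinearMap.codRestrict (intervalSub c d (x + t))
    ((if a ≤ (x : ℝ) ∧ (x : ℝ) + t < d then (1 : ℝ) else 0) • (intervalSub a b x).subtype)
    (fun v => by
      split_ifs with hx
      · rw [intervalSub, if_pos (by push_cast; constructor <;> linarith)]
        exact Submodule.mem_top
      · rw [zero_smul]
        exact Submodule.zero_mem _)

lemma val_homShiftApp (hca : c ≤ a + t) (x : ℝ≥0) (v : (intervalModule a b).V x) :
    Subtype.val (homShiftApp (d := d) hca x v) =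
      if a ≤ (x : ℝ) ∧ (x : ℝ) + t < d then Subtype.val v else 0 := by
  change (((if a ≤ (x : ℝ) ∧ (x : ℝ) + t < d then (1 : ℝ) else 0) •
    (intervalSub a b x).subtype) v : ℝ) = _
  split_ifs
  · simp
  · rw [zero_smul]; rfl

noncomputable def homShift (hca : c ≤ a + t) (hdb : d ≤ b + t) :
    (intervalModule a b).Hom ((intervalModule c d).shift t) where
  app := homShiftApp hca
  comm {x y} h := by
    refine LinearMap.ext fun v => Subtype.ext ?_
    have hxy : (x : ℝ) ≤ y := h
    change Subtype.val (homShiftApp hca y ((intervalModule a b).map h v)) =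
      Subtype.val ((intervalModule c d).map (add_le_add h le_rfl) (homShiftApp hca x v))
    rw [val_homShiftApp, val_map, val_map, val_homShiftApp]
    by_cases hv : Subtype.val v = 0
    · simp [hv]
    obtain ⟨hax, hxb⟩ := mem_of_val_ne_zero hv
    push_cast
    split_ifs <;> grind

theorem homNeZero_shift_iff (ha : 0 ≤ a) (hab : a < b) :
    HomNeZero (intervalModule a b) ((intervalModule c d).shift t) ↔
      c ≤ a + t ∧ a + t < d ∧ d ≤ b + t := by
  lift a to ℝ≥0 using ha
  constructor
  · rintro ⟨F, x, hF⟩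
    obtain ⟨hax, hxb⟩ := mem_of_ne_zero_of_domain hF
    have hFa : F.app a ≠ 0 :=
      F.app_ne_zero_of_surjective (show (a : ℝ) ≤ x from hax) (map_surjective _ le_rfl) hF
    obtain ⟨hca, had⟩ := mem_of_ne_zero_of_codomain hFa
    push_cast at hca had
    refine ⟨hca, had, ?_⟩
    by_contra! hbd
    lift b to ℝ≥0 using (a.2.trans hab.le)
    have hxb : x ≤ b := hxb.le
    refine hF (F.app_eq_zero_of_injective hxb (map_eq_zero _ le_rfl)
      (map_injective (add_le_add hxb le_rfl) ?_))
    push_cast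
    linarith
  · rintro ⟨hca, had, hdb⟩
    have hmem : (1 : ℝ) ∈ intervalSub a b a := by
      rw [intervalSub, if_pos ⟨le_rfl, hab⟩]
      exact Submodule.mem_top
    refine ⟨homShift hca hdb, a, fun h0 => ?_⟩
    have h1 := val_homShiftApp (b := b) (d := d) hca a ⟨1, hmem⟩
    rw [if_pos ⟨le_rfl, had⟩, show homShiftApp hca a = 0 from h0] at h1
    exact zero_ne_one h1

theorem Sset_eq_Ico (ha : 0 ≤ a) (hab : a < b) :
    Sset (intervalModule a b) (intervalModule c d) =
      Set.Ico (max (max 0 (c - a)) (d - b)) (d - a) := by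
  ext x
  simp only [Sset, Set.mem_ofPred_eq, Set.mem_Ico, max_le_iff]
  constructor
  · rintro ⟨hx, h⟩
    rw [homNeZero_shift_iff ha hab, Real.coe_toNNReal _ hx] at h
    exact ⟨⟨⟨hx, by linarith⟩, by linarith⟩, by linarith⟩
  · rintro ⟨⟨⟨hx, hca⟩, hdb⟩, had⟩
    refine ⟨hx, (homNeZero_shift_iff ha hab).2 ?_⟩
    rw [Real.coe_toNNReal _ hx]
    exact ⟨by linarith, by linarith, by linarith⟩

end intervalModule

lemma eq_ite_of_isLeast_Ico {α : Type*} [LinearOrder α] [Zero α] {l u σ : α}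
    (h₁ : (Set.Ico l u).Nonempty → IsLeast (Set.Ico l u) σ)
    (h₂ : ¬(Set.Ico l u).Nonempty → σ = 0) :
    σ = if l < u then l else 0 := by
  split_ifs with h
  · exact (h₁ (Set.nonempty_Ico.2 h)).unique (isLeast_Ico h)
  · exact h₂ (by rwa [Set.nonempty_Ico])

theorem stmt3 (a b c d σ τ : ℝ) (ha : 0 ≤ a) (hab : a < b) (hc : 0 ≤ c) (hcd : c < d)
    (hσ1 : (Sset (intervalModule a b) (intervalModule c d)).Nonempty → IsLeast (Sset (intervalModule a b) (intervalModule c d)) σ)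
    (hσ2 : ¬ (Sset (intervalModule a b) (intervalModule c d)).Nonempty → σ = 0)
    (hτ1 : (Sset (intervalModule c d) (intervalModule a b)).Nonempty → IsLeast (Sset (intervalModule c d) (intervalModule a b)) τ)
    (hτ2 : ¬ (Sset (intervalModule c d) (intervalModule a b)).Nonempty → τ = 0) :
    max |a - c| |b - d| = max σ τ := by
  rw [intervalModule.Sset_eq_Ico ha hab] at hσ1 hσ2
  rw [intervalModule.Sset_eq_Ico hc hcd] at hτ1 hτ2
  rw [eq_ite_of_isLeast_Ico hσ1 hσ2, eq_ite_of_isLeast_Ico hτ1 hτ2]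
  -- The two conditions amount to `a < d` and `c < b`, which cannot both fail;
  -- when both hold, `max σ τ = max 0 (max |a - c| |b - d|)`.
  grind [abs_eq_max_neg]
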